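/- arXiv:2312.04110 — 9 statements merged into one kernel-verified Lean document; each statement's English description precedes it below -/
import Mathlib

section
/- Let (Ω, P) be a probability space, let t be an integer, let s : Ω → ℤ be measurable with P(s = t) > 0 and P(s = t−1) > 0, and let L_t, L_{t−1} : Ω → ℝ be integrable random variables (the potential log incident case numbers generated by the day-t and day-(t−1) growth models, conditional on the fixed features of the county). Suppose (Assumption 1, instantaneous exponential growth) there exist real numbers α, r, e such that for every integer u with P(s = u) > 0 one has E[L_t | s = u] = α + r·u + e, and (Assumption 2, overlap) E[L_t | s = t−1] = E[L_{t−1} | s = t−1]. Then the instantaneous exponential growth rate is identified as r = E[L_t | s = t] − E[L_{t−1} | s = t−1]. -/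
open MeasureTheory

/-- Conditional expectation of `Y` given the event `{ω | s ω = u}`:
`E[Y | s = u] = (∫_{s = u} Y dP) / P(s = u)`. -/
noncomputable def condExpEvent {Ω : Type*} [MeasurableSpace Ω] (P : Measure Ω)
    (Y : Ω → ℝ) (s : Ω → ℤ) (u : ℤ) : ℝ :=
  (∫ ω in {ω | s ω = u}, Y ω ∂P) / (P {ω | s ω = u}).toReal

theorem stmt_0 {Ω : Type*} [MeasurableSpace Ω] (P : Measure Ω) [IsProbabilityMeasure P]
    (t : ℤ) (s : Ω → ℤ) (hs : Measurable s)
    (Lt Ltm : Ω → ℝ) (hLt : Integrable Lt P) (hLtm : Integrable Ltm P)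
    (hpt : 0 < P {ω | s ω = t}) (hptm : 0 < P {ω | s ω = t - 1})
    (α r e : ℝ)
    (hA1 : ∀ u : ℤ, 0 < P {ω | s ω = u} →
      condExpEvent P Lt s u = α + r * (u : ℝ) + e)
    (hA2 : condExpEvent P Lt s (t - 1) = condExpEvent P Ltm s (t - 1)) :
    r = condExpEvent P Lt s t - condExpEvent P Ltm s (t - 1) := by
  have h1 := hA1 t hpt
  have h2 := hA1 (t - 1) hptm
  rw [h1, ← hA2, h2]
  push_cast
  ring
end

section
/- Let (Ω, P) be a probability space, let a < b be integers, and let s : Ω → ℤ be measurable with a ≤ s ≤ b almost surely and P(s = j) > 0 for every j ∈ {a, …, b}. Let Y : Ω → ℝ be integrable. Then Var(s) > 0, and the population least-squares slope decomposes as a weighted sum of consecutive two-point differences: Cov(Y, s)/Var(s) = Σ_{i=a+1}^{b} μ_i · (E[Y | s = i] − E[Y | s = i−1]), where μ_i := (Σ_{j=i}^{b} P(s = j)·(j − E[s])) / (Σ_{j=a}^{b} P(s = j)·(j − a)·(j − E[s])). -/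
open MeasureTheory

/-- Covariance: `Cov(U, V) = E[U·V] − E[U]·E[V]`. -/
noncomputable def cov {Ω : Type*} [MeasurableSpace Ω] (P : Measure Ω) (U V : Ω → ℝ) : ℝ :=
  ∫ ω, U ω * V ω ∂P - (∫ ω, U ω ∂P) * (∫ ω, V ω ∂P)

/-- The population weight
`μ_i = (Σ_{j=i}^{b} P(s = j)·(j − E[s])) / (Σ_{j=a}^{b} P(s = j)·(j − a)·(j − E[s]))`. -/
noncomputable def popWeight {Ω : Type*} [MeasurableSpace Ω] (P : Measure Ω)
    (s : Ω → ℤ) (a b i : ℤ) : ℝ :=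
  (∑ j ∈ Finset.Icc i b, (P {ω | s ω = j}).toReal * ((j : ℝ) - ∫ ω, (s ω : ℝ) ∂P)) /
  (∑ j ∈ Finset.Icc a b,
    (P {ω | s ω = j}).toReal * ((j : ℝ) - (a : ℝ)) * ((j : ℝ) - ∫ ω, (s ω : ℝ) ∂P))

/-!
Partition `Ω` into the fibres `{s = j}`, `a ≤ j ≤ b`, and write `p j = P(s = j)`,
`g j = E[Y | s = j]`, `E = E[s]`. Then `Cov(Y, s) = ∑ p j (j - E) g j` and
`Var(s) = ∑ p j (j - E)²`. The weights `p j (j - E)` sum to zero, so Abel summation turns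
`∑ p j (j - E) g j` into `∑ᵢ (∑_{j ≥ i} p j (j - E)) (g i - g (i - 1))`, and for the same
reason `Var(s) = ∑ p j (j - a) (j - E)`, the denominator of `μ_i`. Finally `Var(s) > 0`
because `s` charges both `a` and `b`, at least one of which differs from `E`.
-/

open MeasureTheory Finset

theorem sum_mul_sub_mul_sub_eq_of_sum_eq_zero {ι : Type*} {S : Finset ι} {p x : ι → ℝ}
    {E : ℝ} (hcenter : ∑ j ∈ S, p j * (x j - E) = 0) (c : ℝ) :
    ∑ j ∈ S, p j * (x j - c) * (x j - E) = ∑ j ∈ S, p j * (x j - E) ^ 2 := by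
  have hsplit (j : ι) :
      p j * (x j - c) * (x j - E) = p j * (x j - E) ^ 2 + (E - c) * (p j * (x j - E)) := by
    ring
  rw [sum_congr rfl fun j _ => hsplit j, sum_add_distrib, ← mul_sum, hcenter, mul_zero,
    add_zero]

section WeightedSums

variable {a b : ℤ}

theorem sum_Icc_mul_eq_by_parts (w g : ℤ → ℝ) (hab : a ≤ b) :
    ∑ j ∈ Icc a b, w j * g j = (∑ j ∈ Icc a b, w j) * g a +
      ∑ i ∈ Icc (a + 1) b, (∑ j ∈ Icc i b, w j) * (g i - g (i - 1)) := by
  induction a, hab using Int.leInductionDown with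
  | base => simp
  | pred n hnb ih =>
    have hIcc : Icc (n - 1) b = insert (n - 1) (Icc n b) := by
      rw [← insert_Icc_add_one_left_eq_Icc (by omega), sub_add_cancel]
    have hpeel : ∑ i ∈ Icc n b, (∑ j ∈ Icc i b, w j) * (g i - g (i - 1)) =
        (∑ j ∈ Icc n b, w j) * (g n - g (n - 1)) +
          ∑ i ∈ Icc (n + 1) b, (∑ j ∈ Icc i b, w j) * (g i - g (i - 1)) := by
      rw [← insert_Icc_add_one_left_eq_Icc hnb, sum_insert (by simp),
        insert_Icc_add_one_left_eq_Icc hnb]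
    rw [sub_add_cancel, hIcc, sum_insert (by simp), sum_insert (by simp), ih, hpeel]
    ring

variable {p : ℤ → ℝ}

theorem sum_mul_sub_sq_pos (hab : a < b) (hp : ∀ j ∈ Icc a b, 0 < p j) (E : ℝ) :
    0 < ∑ j ∈ Icc a b, p j * ((j : ℝ) - E) ^ 2 := by
  have hne : (a : ℝ) ≠ E ∨ (b : ℝ) ≠ E := by
    by_contra! h
    exact hab.ne (by exact_mod_cast h.1.trans h.2.symm)
  refine sum_pos' (fun j hj => mul_nonneg (hp j hj).le (sq_nonneg _)) ?_
  obtain ⟨j, hj, hjE⟩ : ∃ j ∈ Icc a b, (j : ℝ) ≠ E := by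
    rcases hne with h | h
    exacts [⟨a, left_mem_Icc.2 hab.le, h⟩, ⟨b, right_mem_Icc.2 hab.le, h⟩]
  exact ⟨j, hj, mul_pos (hp j hj) (sq_pos_of_ne_zero (sub_ne_zero.2 hjE))⟩

end WeightedSums

section Fibres

variable {Ω α : Type*} [MeasurableSpace Ω] {P : Measure Ω} [MeasurableSpace α]
  [MeasurableSingletonClass α] {s : Ω → α} {S : Finset α}

theorem integral_eq_sum_setIntegral_fibre (hs : Measurable s) (hS : ∀ᵐ ω ∂P, s ω ∈ S)
    {f : Ω → ℝ} (hf : Integrable f P) :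
    ∫ ω, f ω ∂P = ∑ j ∈ S, ∫ ω in {ω | s ω = j}, f ω ∂P := by
  have hcover : (⋃ j ∈ S, {ω | s ω = j}) =ᵐ[P] (Set.univ : Set Ω) :=
    ae_eq_univ.2 (ae_iff.1 (hS.mono fun ω hω => Set.mem_biUnion hω rfl))
  rw [← setIntegral_univ, ← setIntegral_congr_set hcover]
  exact integral_biUnion_finset S (fun j _ => hs (measurableSet_singleton j))
    (fun i _ j _ hij => Set.disjoint_left.2 fun ω hi hj => hij (hi.symm.trans hj))
    (fun j _ => hf.integrableOn)

theorem setIntegral_fibre_comp (hs : Measurable s) (F : Ω → α → ℝ) (j : α) :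
    ∫ ω in {ω | s ω = j}, F ω (s ω) ∂P = ∫ ω in {ω | s ω = j}, F ω j ∂P :=
  setIntegral_congr_fun (hs (measurableSet_singleton j)) fun ω (hω : s ω = j) => by rw [hω]

theorem setIntegral_fibre_comp_eq_mul (hs : Measurable s) (v : α → ℝ) (j : α) :
    ∫ ω in {ω | s ω = j}, v (s ω) ∂P = (P {ω | s ω = j}).toReal * v j := by
  rw [setIntegral_fibre_comp hs (fun _ => v) j, setIntegral_const, smul_eq_mul,
    measureReal_def]

variable [Countable α]

theorem MeasureTheory.Integrable.mul_comp_of_ae_mem_finset (hs : Measurable s)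
    (hS : ∀ᵐ ω ∂P, s ω ∈ S) {f : Ω → ℝ} (hf : Integrable f P) (v : α → ℝ) :
    Integrable (fun ω => f ω * v (s ω)) P :=
  hf.mul_bdd ((measurable_of_countable v).comp hs).aestronglyMeasurable
    (hS.mono fun _ hω => single_le_sum (f := fun j => ‖v j‖) (fun _ _ => norm_nonneg _) hω)

theorem cov_comp_eq_sum_setIntegral_fibre (hs : Measurable s)
    (hS : ∀ᵐ ω ∂P, s ω ∈ S) {U : Ω → ℝ} (hU : Integrable U P) (v : α → ℝ) :
    cov P U (fun ω => v (s ω)) =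
      ∑ j ∈ S, (∫ ω in {ω | s ω = j}, U ω ∂P) * (v j - ∫ ω, v (s ω) ∂P) := by
  have hfibre (j : α) :
      ∫ ω in {ω | s ω = j}, U ω * v (s ω) ∂P = (∫ ω in {ω | s ω = j}, U ω ∂P) * v j :=
    (setIntegral_fibre_comp hs (fun ω x => U ω * v x) j).trans (integral_mul_const _ _)
  rw [cov, integral_eq_sum_setIntegral_fibre hs hS (hU.mul_comp_of_ae_mem_finset hs hS v),
    integral_eq_sum_setIntegral_fibre hs hS hU, sum_mul]
  simp only [hfibre, mul_sub, sum_sub_distrib]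

variable [IsProbabilityMeasure P]

theorem sum_measure_fibre_mul_sub_integral_eq_zero (hs : Measurable s)
    (hS : ∀ᵐ ω ∂P, s ω ∈ S) (v : α → ℝ) :
    ∑ j ∈ S, (P {ω | s ω = j}).toReal * (v j - ∫ ω, v (s ω) ∂P) = 0 := by
  have hcov : cov P (fun _ => 1) (fun ω => v (s ω)) = 0 := by simp [cov]
  rw [cov_comp_eq_sum_setIntegral_fibre hs hS (integrable_const (1 : ℝ))] at hcov
  simpa [measureReal_def] using hcov

theorem cov_comp_self_eq_sum (hs : Measurable s) (hS : ∀ᵐ ω ∂P, s ω ∈ S) (v : α → ℝ) :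
    cov P (fun ω => v (s ω)) (fun ω => v (s ω)) =
      ∑ j ∈ S, (P {ω | s ω = j}).toReal * (v j - ∫ ω, v (s ω) ∂P) ^ 2 := by
  have hint : Integrable (fun ω => v (s ω)) P := by
    simpa using (integrable_const (1 : ℝ)).mul_comp_of_ae_mem_finset hs hS v
  rw [cov_comp_eq_sum_setIntegral_fibre hs hS hint, ← sum_mul_sub_mul_sub_eq_of_sum_eq_zero
    (sum_measure_fibre_mul_sub_integral_eq_zero hs hS v) 0]
  simp only [setIntegral_fibre_comp_eq_mul hs, sub_zero]

end Fibres

theorem setIntegral_fibre_eq_mul_condExpEvent {Ω : Type*} [MeasurableSpace Ω]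
    {P : Measure Ω} [IsFiniteMeasure P] (Y : Ω → ℝ) (s : Ω → ℤ) (j : ℤ) :
    ∫ ω in {ω | s ω = j}, Y ω ∂P = (P {ω | s ω = j}).toReal * condExpEvent P Y s j := by
  rcases eq_or_ne (P {ω | s ω = j}).toReal 0 with hzero | hne
  · have hnull : P {ω | s ω = j} = 0 :=
      ((ENNReal.toReal_eq_zero_iff _).1 hzero).resolve_right (measure_ne_top P _)
    simp [hzero, Measure.restrict_eq_zero.2 hnull]
  · rw [condExpEvent, mul_div_cancel₀ _ hne]

theorem cov_comp_eq_sum_mul_condExpEvent {Ω : Type*} [MeasurableSpace Ω]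
    {P : Measure Ω} [IsFiniteMeasure P] {s : Ω → ℤ} {S : Finset ℤ} (hs : Measurable s)
    (hS : ∀ᵐ ω ∂P, s ω ∈ S) {Y : Ω → ℝ} (hY : Integrable Y P) (v : ℤ → ℝ) :
    cov P Y (fun ω => v (s ω)) = ∑ j ∈ S,
      (P {ω | s ω = j}).toReal * (v j - ∫ ω, v (s ω) ∂P) * condExpEvent P Y s j := by
  rw [cov_comp_eq_sum_setIntegral_fibre hs hS hY]
  refine sum_congr rfl fun j _ => ?_
  rw [setIntegral_fibre_eq_mul_condExpEvent]
  ring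

theorem stmt_3 {Ω : Type*} [MeasurableSpace Ω] (P : Measure Ω) [IsProbabilityMeasure P]
    (a b : ℤ) (hab : a < b) (s : Ω → ℤ) (hs : Measurable s)
    (hrange : ∀ᵐ ω ∂P, a ≤ s ω ∧ s ω ≤ b)
    (hpos : ∀ j ∈ Finset.Icc a b, 0 < P {ω | s ω = j})
    (Y : Ω → ℝ) (hY : Integrable Y P) :
    0 < cov P (fun ω => (s ω : ℝ)) (fun ω => (s ω : ℝ)) ∧
    cov P Y (fun ω => (s ω : ℝ)) / cov P (fun ω => (s ω : ℝ)) (fun ω => (s ω : ℝ)) =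
      ∑ i ∈ Finset.Icc (a + 1) b, popWeight P s a b i *
        (condExpEvent P Y s i - condExpEvent P Y s (i - 1)) := by
  have hS : ∀ᵐ ω ∂P, s ω ∈ Icc a b := hrange.mono fun _ hω => mem_Icc.2 hω
  have hcenter := sum_measure_fibre_mul_sub_integral_eq_zero hs hS ((↑) : ℤ → ℝ)
  have hvar := cov_comp_self_eq_sum hs hS ((↑) : ℤ → ℝ)
  refine ⟨hvar ▸ sum_mul_sub_sq_pos hab
    (fun j hj => ENNReal.toReal_pos (hpos j hj).ne' (measure_ne_top P _)) _, ?_⟩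
  rw [cov_comp_eq_sum_mul_condExpEvent hs hS hY, hvar, sum_Icc_mul_eq_by_parts _ _ hab.le,
    hcenter, zero_mul, zero_add, sum_div]
  refine sum_congr rfl fun i _ => ?_
  rw [popWeight, sum_mul_sub_mul_sub_eq_of_sum_eq_zero hcenter, div_mul_eq_mul_div]
end

section
/- Let (Ω, P) be a probability space, let a < b be integers, and let s : Ω → ℤ be measurable with a ≤ s ≤ b almost surely and P(s = j) > 0 for every j ∈ {a, …, b}. Then for every integer i, the tail sum Σ_{j=i}^{b} P(s = j)·(j − E[s]) is nonnegative, i.e., E[(s − E[s])·1_{s ≥ i}] ≥ 0. Consequently, since the denominator Σ_{j=a}^{b} P(s = j)·(j − a)·(j − E[s]) = Var(s) > 0, each population weight μ_i := (Σ_{j=i}^{b} P(s = j)·(j − E[s])) / (Σ_{j=a}^{b} P(s = j)·(j − a)·(j − E[s])) with i ∈ {a+1, …, b} is nonnegative. -/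
/-!
Write `m = E[s]` and `p j = P(s = j)`. For a threshold `t > m` the centred tail
`E[(s - m); s ≥ t]` has a nonnegative integrand. For `t ≤ m` it equals `E[s - m] = 0` minus
`E[(s - m); s < t]`, whose integrand is negative. Since `s` takes finitely many integer values,
the tail sums of the statement are these integrals. The denominator of `μ_i` is
`∑ p j (j - m)² + (m - a) ∑ p j (j - m) = Var(s) ≥ 0`.
-/
open MeasureTheory

open Finset

section

variable {Ω β E : Type*} [MeasurableSpace Ω] {P : Measure Ω}

theorem integral_comp_eq_sum_of_ae_mem [IsFiniteMeasure P] [MeasurableSpace β]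
    [MeasurableSingletonClass β] [NormedAddCommGroup E] [NormedSpace ℝ E] [CompleteSpace E]
    {s : Ω → β}
    (hs : Measurable s) {S : Finset β} (hS : ∀ᵐ ω ∂P, s ω ∈ S) (g : β → E) :
    ∫ ω, g (s ω) ∂P = ∑ j ∈ S, P.real {ω | s ω = j} • g j := by
  have hmeas (j : β) : MeasurableSet {ω | s ω = j} := hs (measurableSet_singleton j)
  have hae : (fun ω => g (s ω)) =ᵐ[P]
      fun ω => ∑ j ∈ S, Set.indicator {ω' | s ω' = j} (fun _ => g j) ω := by
    filter_upwards [hS] with ω hω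
    rw [Finset.sum_eq_single_of_mem (s ω) hω,
      Set.indicator_of_mem (s := {ω' | s ω' = s ω}) rfl]
    intro j _ hne
    exact Set.indicator_of_notMem (fun h : s ω = j => hne h.symm) _
  rw [integral_congr_ae hae,
    integral_finsetSum _ fun j _ => (integrable_const _).indicator (hmeas j)]
  exact Finset.sum_congr rfl fun j _ => integral_indicator_const _ (hmeas j)

theorem integral_sub_integral_eq_zero [IsProbabilityMeasure P] (X : Ω → ℝ) :
    ∫ ω, (X ω - ∫ x, X x ∂P) ∂P = 0 := by
  simpa [ProbabilityTheory.centralMoment] using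
    ProbabilityTheory.centralMoment_one (X := X) (μ := P)

theorem setIntegral_setOf_le_sub_integral_nonneg [IsProbabilityMeasure P] {X : Ω → ℝ}
    (hXm : Measurable X) (hX : Integrable X P) (t : ℝ) :
    0 ≤ ∫ ω in {ω | t ≤ X ω}, (X ω - ∫ x, X x ∂P) ∂P := by
  set m := ∫ x, X x ∂P
  have hA : MeasurableSet {ω | t ≤ X ω} := measurableSet_le measurable_const hXm
  rcases le_or_gt t m with htm | hmt
  · have hcompl : ∫ ω in {ω | t ≤ X ω}ᶜ, (X ω - m) ∂P ≤ 0 :=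
      setIntegral_nonpos hA.compl fun ω hω => by
        simp only [Set.mem_compl_iff, Set.mem_ofPred_eq, not_le] at hω
        linarith
    have hsplit : ∫ ω in {ω | t ≤ X ω}, (X ω - m) ∂P + ∫ ω in {ω | t ≤ X ω}ᶜ, (X ω - m) ∂P
        = ∫ ω, (X ω - m) ∂P := integral_add_compl hA (hX.sub (integrable_const m))
    have hcentered : ∫ ω, (X ω - m) ∂P = 0 := integral_sub_integral_eq_zero X
    linarith
  · exact setIntegral_nonneg hA fun ω hω => by
      simp only [Set.mem_ofPred_eq] at hω
      linarith

end

theorem sum_mul_sub_mul_sub_nonneg {ι : Type*} (S : Finset ι) {p x : ι → ℝ}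
    (hp : ∀ j ∈ S, 0 ≤ p j) {m : ℝ} (hm : ∑ j ∈ S, p j * (x j - m) = 0) (c : ℝ) :
    0 ≤ ∑ j ∈ S, p j * (x j - c) * (x j - m) :=
  calc 0 ≤ ∑ j ∈ S, p j * (x j - m) ^ 2 + (m - c) * ∑ j ∈ S, p j * (x j - m) := by
        rw [hm, mul_zero, add_zero]
        exact Finset.sum_nonneg fun j hj => mul_nonneg (hp j hj) (sq_nonneg _)
    _ = ∑ j ∈ S, p j * (x j - c) * (x j - m) := by
        rw [Finset.mul_sum, ← Finset.sum_add_distrib]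
        exact Finset.sum_congr rfl fun j _ => by ring

section

variable {Ω : Type*} [MeasurableSpace Ω] {P : Measure Ω} [IsFiniteMeasure P]
  {a b : ℤ} {s : Ω → ℤ}

theorem integrable_intCast_of_ae_mem_Icc (hs : Measurable s)
    (hrange : ∀ᵐ ω ∂P, a ≤ s ω ∧ s ω ≤ b) : Integrable (fun ω => (s ω : ℝ)) P :=
  Integrable.of_bound (measurable_from_top.comp hs).aestronglyMeasurable
    (max |(a : ℝ)| |(b : ℝ)|) <| by
    filter_upwards [hrange] with ω hω
    exact abs_le_max_abs_abs (by exact_mod_cast hω.1) (by exact_mod_cast hω.2)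

theorem sum_Icc_measure_mul_eq_setIntegral (hs : Measurable s)
    (hrange : ∀ᵐ ω ∂P, a ≤ s ω ∧ s ω ≤ b) (f : ℤ → ℝ) (i : ℤ) :
    ∑ j ∈ Icc i b, P.real {ω | s ω = j} * f j = ∫ ω in {ω | i ≤ s ω}, f (s ω) ∂P := by
  have hS : ∀ᵐ ω ∂P, s ω ∈ Icc (min a i) b := by
    filter_upwards [hrange] with ω hω
    exact mem_Icc.2 ⟨min_le_of_left_le hω.1, hω.2⟩
  have hfilter : (Icc (min a i) b).filter (i ≤ ·) = Icc i b := by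
    ext j; simp only [mem_filter, mem_Icc]; omega
  rw [← integral_indicator (measurableSet_le measurable_const hs)]
  have := integral_comp_eq_sum_of_ae_mem hs hS fun j => if i ≤ j then f j else 0
  simp only [smul_eq_mul, mul_ite, mul_zero, ← sum_filter, hfilter] at this
  rw [← this]
  congr 1 with ω
  simp only [Set.indicator_apply, Set.mem_ofPred_eq]

end

theorem stmt_5_general {Ω : Type*} [MeasurableSpace Ω] (P : Measure Ω) [IsProbabilityMeasure P]
    (a b : ℤ) (s : Ω → ℤ) (hs : Measurable s)
    (hrange : ∀ᵐ ω ∂P, a ≤ s ω ∧ s ω ≤ b) :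
    (∀ i : ℤ,
      0 ≤ ∑ j ∈ Finset.Icc i b, (P {ω | s ω = j}).toReal * ((j : ℝ) - ∫ ω, (s ω : ℝ) ∂P)) ∧
    (∀ i : ℤ,
      0 ≤ ∫ ω, ((s ω : ℝ) - ∫ x, (s x : ℝ) ∂P) *
            Set.indicator {ω' | i ≤ s ω'} (fun _ => (1 : ℝ)) ω ∂P) ∧
    (∀ i ∈ Finset.Icc (a + 1) b, 0 ≤ popWeight P s a b i) := by
  set m := ∫ ω, (s ω : ℝ) ∂P
  have htail (i : ℤ) : 0 ≤ ∫ ω in {ω | i ≤ s ω}, ((s ω : ℝ) - m) ∂P := by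
    simpa only [Int.cast_le] using setIntegral_setOf_le_sub_integral_nonneg
      (X := fun ω => (s ω : ℝ)) (measurable_from_top.comp hs)
      (integrable_intCast_of_ae_mem_Icc hs hrange) (i : ℝ)
  have htail_sum (i : ℤ) :
      0 ≤ ∑ j ∈ Icc i b, (P {ω | s ω = j}).toReal * ((j : ℝ) - m) :=
    (sum_Icc_measure_mul_eq_setIntegral hs hrange (fun j => (j : ℝ) - m) i).symm ▸ htail i
  have hcentered : ∑ j ∈ Icc a b, (P {ω | s ω = j}).toReal * ((j : ℝ) - m) = 0 := by
    have hS : ∀ᵐ ω ∂P, s ω ∈ Icc a b := hrange.mono fun ω hω => mem_Icc.2 hω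
    rw [← integral_sub_integral_eq_zero (P := P) (fun ω => (s ω : ℝ)),
      integral_comp_eq_sum_of_ae_mem hs hS (fun j : ℤ => (j : ℝ) - m)]
    rfl
  refine ⟨htail_sum, fun i => ?_, fun i _ => ?_⟩
  · have h := htail i
    rw [← integral_indicator (measurableSet_le measurable_const hs)] at h
    convert h using 2 with ω
    simp only [Set.indicator_apply, Set.mem_ofPred_eq, mul_ite, mul_one, mul_zero]
  · exact div_nonneg (htail_sum i) <|
      sum_mul_sub_mul_sub_nonneg _ (fun j _ => ENNReal.toReal_nonneg) hcentered a

theorem stmt_5 {Ω : Type*} [MeasurableSpace Ω] (P : Measure Ω) [IsProbabilityMeasure P]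
    (a b : ℤ) (hab : a < b) (s : Ω → ℤ) (hs : Measurable s)
    (hrange : ∀ᵐ ω ∂P, a ≤ s ω ∧ s ω ≤ b)
    (hpos : ∀ j ∈ Finset.Icc a b, 0 < P {ω | s ω = j}) :
    (∀ i : ℤ,
      0 ≤ ∑ j ∈ Finset.Icc i b, (P {ω | s ω = j}).toReal * ((j : ℝ) - ∫ ω, (s ω : ℝ) ∂P)) ∧
    (∀ i : ℤ,
      0 ≤ ∫ ω, ((s ω : ℝ) - ∫ x, (s x : ℝ) ∂P) *
            Set.indicator {ω' | i ≤ s ω'} (fun _ => (1 : ℝ)) ω ∂P) ∧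
    (∀ i ∈ Finset.Icc (a + 1) b, 0 ≤ popWeight P s a b i) :=
  stmt_5_general P a b s hs hrange
end

section
/- Let y : ℤ → ℝ, let t be an integer and let δ ≥ 2 be a natural number. Let ī := (2t − δ + 1)/2 (the arithmetic mean of {t−δ+1, …, t}) and ȳ := (1/δ)·Σ_{i=t−δ+1}^{t} y(i). Then the ordinary-least-squares slope fitted to the δ points {(i, y(i)) : i = t−δ+1, …, t}, namely (Σ_{i=t−δ+1}^{t} (i − ī)·(y(i) − ȳ)) / (Σ_{i=t−δ+1}^{t} (i − ī)²), equals the convex combination of consecutive differences Σ_{t⁻=t−δ+2}^{t} μ̂_{t⁻} · (y(t⁻) − y(t⁻ − 1)). -/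
/-!
The centred abscissae `c i = i - ī` of the window sum to zero, since `i ↦ 2ī - i` pairs them off
with opposite signs. Hence `ȳ` drops out of the numerator of the slope, and the denominator of
`μ̂` equals `∑ c i ^ 2`, as it differs from it by a multiple of `∑ c i`. Summation by parts turns
`∑ c i * y i` into `∑ (∑_{i ≥ t⁻} c i) * (y t⁻ - y (t⁻ - 1))`, the boundary term being a multiple
of `∑ c i` again.
-/

/-- The OLS fitting-window weight
`μ̂_{t⁻} = (Σ_{i=t⁻}^{t} (i − (2t−δ+1)/2)) /
          (Σ_{i=t−δ+1}^{t} (i − (t−δ+1))·(i − (2t−δ+1)/2))`,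
for a fitting window of size `δ` ending at day `t`, with arithmetic in `ℝ`. -/
noncomputable def olsWeight (t : ℤ) (δ : ℕ) (tm : ℤ) : ℝ :=
  (∑ i ∈ Finset.Icc tm t, ((i : ℝ) - (2 * (t : ℝ) - (δ : ℝ) + 1) / 2)) /
  (∑ i ∈ Finset.Icc (t - (δ : ℤ) + 1) t,
    ((i : ℝ) - ((t : ℝ) - (δ : ℝ) + 1)) * ((i : ℝ) - (2 * (t : ℝ) - (δ : ℝ) + 1) / 2))

open Finset

theorem Finset.sum_mul_sub_const_of_sum_eq_zero {ι R : Type*} [CommRing R] (s : Finset ι)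
    (c g : ι → R) (k : R) (hc : ∑ i ∈ s, c i = 0) :
    ∑ i ∈ s, c i * (g i - k) = ∑ i ∈ s, c i * g i := by
  simp only [mul_sub, sum_sub_distrib, ← sum_mul, hc, zero_mul, sub_zero]

theorem sum_Icc_intCast_sub_midpoint (a b : ℤ) :
    ∑ i ∈ Icc a b, ((i : ℝ) - (a + b) / 2) = 0 :=
  sum_involution (fun i _ ↦ a + b - i) (fun i _ ↦ by push_cast; ring)
    (fun i _ hi h ↦ hi (by
      rw [show (a : ℝ) + b = 2 * i by exact_mod_cast (by omega : a + b = 2 * i)]; ring))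
    (fun i hi ↦ by rw [mem_Icc] at hi ⊢; omega) (fun i _ ↦ by ring)

theorem sum_Icc_eq_add_sum_Icc_add_one {M : Type*} [AddCommMonoid M] (g : ℤ → M) {a t : ℤ}
    (h : a ≤ t) : ∑ i ∈ Icc a t, g i = g a + ∑ i ∈ Icc (a + 1) t, g i := by
  rw [← insert_Icc_add_one_left_eq_Icc h, sum_insert (by simp)]

theorem sum_Icc_mul_eq_add_sum_tail_mul_sub {R : Type*} [CommRing R] (c f : ℤ → R) (a t : ℤ) :
    ∑ i ∈ Icc a t, c i * f i = (∑ i ∈ Icc a t, c i) * f a +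
      ∑ m ∈ Icc (a + 1) t, (∑ i ∈ Icc m t, c i) * (f m - f (m - 1)) := by
  rcases lt_or_ge t a with hta | hat
  · simp [Icc_eq_empty_of_lt hta, Icc_eq_empty_of_lt (hta.trans (lt_add_one a))]
  induction a, hat using Int.leInductionDown with
  | base => simp
  | pred a hat ih =>
    have hat' : a - 1 ≤ t := by omega
    rw [sum_Icc_eq_add_sum_Icc_add_one _ hat', sum_Icc_eq_add_sum_Icc_add_one _ hat',
      sub_add_cancel, ih,
      sum_Icc_eq_add_sum_Icc_add_one (fun m ↦ (∑ i ∈ Icc m t, c i) * (f m - f (m - 1))) hat]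
    ring

theorem stmt_6_general (y : ℤ → ℝ) (t : ℤ) (δ : ℕ) :
    (∑ i ∈ Finset.Icc (t - (δ : ℤ) + 1) t,
        ((i : ℝ) - (2 * (t : ℝ) - (δ : ℝ) + 1) / 2) *
          (y i - (1 / (δ : ℝ)) * ∑ j ∈ Finset.Icc (t - (δ : ℤ) + 1) t, y j)) /
      (∑ i ∈ Finset.Icc (t - (δ : ℤ) + 1) t,
        ((i : ℝ) - (2 * (t : ℝ) - (δ : ℝ) + 1) / 2) ^ 2) =
    ∑ tm ∈ Finset.Icc (t - (δ : ℤ) + 2) t, olsWeight t δ tm * (y tm - y (tm - 1)) := by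
  set c : ℤ → ℝ := fun i ↦ (i : ℝ) - (2 * (t : ℝ) - (δ : ℝ) + 1) / 2 with hc
  have hc_sum : ∑ i ∈ Icc (t - δ + 1) t, c i = 0 := by
    have hmid : (2 * (t : ℝ) - δ + 1) / 2 = (((t - δ + 1 : ℤ) : ℝ) + t) / 2 := by
      push_cast; ring
    simpa only [hc, hmid] using sum_Icc_intCast_sub_midpoint (t - δ + 1) t
  have hden : ∑ i ∈ Icc (t - δ + 1) t, ((i : ℝ) - ((t : ℝ) - δ + 1)) * c i
      = ∑ i ∈ Icc (t - δ + 1) t, c i ^ 2 :=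
    calc _ = ∑ i ∈ Icc (t - δ + 1) t, c i * (c i - ((t : ℝ) - δ + 1 - (2 * t - δ + 1) / 2)) :=
          sum_congr rfl fun i _ ↦ by ring
      _ = ∑ i ∈ Icc (t - δ + 1) t, c i * c i := sum_mul_sub_const_of_sum_eq_zero _ _ _ _ hc_sum
      _ = _ := by simp only [sq]
  rw [sum_mul_sub_const_of_sum_eq_zero _ c y _ hc_sum, sum_Icc_mul_eq_add_sum_tail_mul_sub,
    hc_sum, zero_mul, zero_add, sum_div, ← hden, show t - δ + 1 + 1 = t - δ + 2 by ring]
  exact sum_congr rfl fun m _ ↦ (div_mul_eq_mul_div _ _ _).symm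

theorem stmt_6 (y : ℤ → ℝ) (t : ℤ) (δ : ℕ) (hδ : 2 ≤ δ) :
    (∑ i ∈ Finset.Icc (t - (δ : ℤ) + 1) t,
        ((i : ℝ) - (2 * (t : ℝ) - (δ : ℝ) + 1) / 2) *
          (y i - (1 / (δ : ℝ)) * ∑ j ∈ Finset.Icc (t - (δ : ℤ) + 1) t, y j)) /
      (∑ i ∈ Finset.Icc (t - (δ : ℤ) + 1) t,
        ((i : ℝ) - (2 * (t : ℝ) - (δ : ℝ) + 1) / 2) ^ 2) =
    ∑ tm ∈ Finset.Icc (t - (δ : ℤ) + 2) t, olsWeight t δ tm * (y tm - y (tm - 1)) :=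
  stmt_6_general y t δ
end

section
/- Let t be an integer and let δ ≥ 2 be a natural number. Then the OLS fitting-window weights sum to one: Σ_{t⁻=t−δ+2}^{t} μ̂_{t⁻} = 1. -/
lemma icc_top (a b : ℤ) (h : a ≤ b + 1) :
    Finset.Icc a (b+1) = insert (b+1) (Finset.Icc a b) := by
  ext x; simp; omega

lemma shiftSum (f : ℤ → ℝ) (a : ℤ) (n : ℕ) :
    ∑ i ∈ Finset.Icc a (a + n), f i = ∑ j ∈ Finset.range (n+1), f (a + j) := by
  induction n with
  | zero => simp
  | succ n ih =>
    have h1 : a + ((n:ℕ)+1 : ℕ) = (a + n) + 1 := by push_cast; ring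
    rw [h1, icc_top _ _ (by omega), Finset.sum_insert (by simp), ih,
      Finset.sum_range_succ (fun j : ℕ => f (a + j)) (n+1), add_comm]
    congr 2
    push_cast; ring

lemma shiftSum' (f : ℤ → ℝ) (a b : ℤ) (n : ℕ) (h : b = a + n) :
    ∑ i ∈ Finset.Icc a b, f i = ∑ j ∈ Finset.range (n+1), f (a + j) := by
  rw [h]; exact shiftSum f a n

lemma sumQuad (n : ℕ) (b c d : ℝ) :
    ∑ k ∈ Finset.range n, (b*(k:ℝ)^2 + c*(k:ℝ) + d)
      = b*((n:ℝ)*(n-1)*(2*n-1)/6) + c*((n:ℝ)*(n-1)/2) + d*n := by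
  induction n with
  | zero => simp
  | succ n ih => rw [Finset.sum_range_succ, ih]; push_cast; ring

theorem stmt_7 (t : ℤ) (δ : ℕ) (hδ : 2 ≤ δ) :
    ∑ tm ∈ Finset.Icc (t - (δ : ℤ) + 2) t, olsWeight t δ tm = 1 := by
  have hδR : (2:ℝ) ≤ (δ:ℝ) := by exact_mod_cast hδ
  -- Denominator value
  have hD : (∑ i ∈ Finset.Icc (t - (δ : ℤ) + 1) t,
      ((i : ℝ) - ((t : ℝ) - (δ : ℝ) + 1)) * ((i : ℝ) - (2 * (t : ℝ) - (δ : ℝ) + 1) / 2))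
      = (δ:ℝ) * ((δ:ℝ) - 1) * ((δ:ℝ) + 1) / 12 := by
    rw [shiftSum' _ _ _ (δ - 1)
        (by rw [Nat.cast_sub (by omega : 1 ≤ δ)]; push_cast; ring)]
    rw [show δ - 1 + 1 = δ by omega]
    rw [Finset.sum_congr rfl (fun j _ => show
        (((t - (δ:ℤ) + 1 + (j:ℕ) : ℤ) : ℝ) - ((t:ℝ) - δ + 1)) *
          (((t - (δ:ℤ) + 1 + (j:ℕ) : ℤ) : ℝ) - (2*(t:ℝ) - δ + 1)/2)
        = 1*(j:ℝ)^2 + (-(((δ:ℝ)-1)/2))*(j:ℝ) + 0 from by push_cast; ring)]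
    rw [sumQuad]; ring
  -- Numerator values: inner sums
  have hN : ∀ k ∈ Finset.range (δ - 1),
      (∑ i ∈ Finset.Icc (t - (δ:ℤ) + 2 + (k:ℕ)) t,
        ((i : ℝ) - (2 * (t : ℝ) - (δ : ℝ) + 1) / 2))
      = -(1/2)*(k:ℝ)^2 + (((δ:ℝ)-2)/2)*(k:ℝ) + ((δ:ℝ)-1)/2 := by
    intro k hk
    have hk' : k < δ - 1 := Finset.mem_range.mp hk
    have hkR : (k:ℝ) ≤ (δ:ℝ) - 2 := by
      have : k ≤ δ - 2 := by omega
      have := (Nat.cast_le (α := ℝ)).mpr this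
      rw [Nat.cast_sub (by omega : 2 ≤ δ)] at this
      push_cast at this ⊢; linarith
    rw [shiftSum' _ _ _ (δ - 2 - k)
        (by rw [Nat.cast_sub (by omega : k ≤ δ - 2), Nat.cast_sub (by omega : 2 ≤ δ)];
            push_cast; ring)]
    rw [show δ - 2 - k + 1 = δ - 1 - k by omega]
    rw [Finset.sum_congr rfl (fun j _ => show
        ((t - (δ:ℤ) + 2 + (k:ℕ) + (j:ℕ) : ℤ) : ℝ) - (2*(t:ℝ) - δ + 1)/2
        = 0*(j:ℝ)^2 + 1*(j:ℝ) + ((k:ℝ) + (3 - (δ:ℝ))/2) from by push_cast; ring)]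
    rw [sumQuad]
    have hm : ((δ - 1 - k : ℕ) : ℝ) = (δ:ℝ) - 1 - (k:ℝ) := by
      rw [Nat.cast_sub (by omega : k ≤ δ - 1), Nat.cast_sub (by omega : 1 ≤ δ)]
      push_cast; ring
    rw [hm]; ring
  -- Put it together
  simp only [olsWeight]
  rw [← Finset.sum_div]
  rw [shiftSum' _ _ _ (δ - 2)
      (by rw [Nat.cast_sub (by omega : 2 ≤ δ)]; push_cast; ring)]
  rw [show δ - 2 + 1 = δ - 1 by omega]
  rw [Finset.sum_congr rfl hN, sumQuad, hD]
  have hm1 : ((δ - 1 : ℕ) : ℝ) = (δ:ℝ) - 1 := by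
    rw [Nat.cast_sub (by omega : 1 ≤ δ)]; push_cast; ring
  rw [hm1]
  have hDne : (δ:ℝ) * ((δ:ℝ) - 1) * ((δ:ℝ) + 1) / 12 ≠ 0 := by
    apply ne_of_gt
    apply div_pos _ (by norm_num)
    have h1 : (0:ℝ) < (δ:ℝ) - 1 := by linarith
    have h2 : (0:ℝ) < (δ:ℝ) := by linarith
    have h3 : (0:ℝ) < (δ:ℝ) + 1 := by linarith
    exact mul_pos (mul_pos h2 h1) h3
  rw [div_eq_one_iff_eq hDne]
  ring
end

section
/- Let t be an integer and let δ ≥ 2 be a natural number. Then every OLS fitting-window weight is nonnegative: μ̂_{t⁻} ≥ 0 for every t⁻ ∈ {t−δ+2, …, t}. -/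
private lemma icc_reindex (f : ℤ → ℝ) (a : ℤ) :
    ∀ n : ℕ, ∑ i ∈ Finset.Icc a (a + n), f i = ∑ j ∈ Finset.range (n + 1), f (a + j) := by
  intro n
  induction n with
  | zero => simp
  | succ n ih =>
    have hins : Finset.Icc a (a + ((n : ℤ) + 1)) =
        insert (a + (n : ℤ) + 1) (Finset.Icc a (a + (n : ℤ))) := by
      ext x
      simp only [Finset.mem_Icc, Finset.mem_insert]
      omega
    have hc : ((n + 1 : ℕ) : ℤ) = (n : ℤ) + 1 := by push_cast; ring
    rw [hc, hins, Finset.sum_insert (by simp only [Finset.mem_Icc]; omega), ih]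
    rw [Finset.sum_range_succ (fun j : ℕ => f (a + j)) (n + 1)]
    push_cast
    ring_nf

private lemma sum_lin (c : ℝ) (m : ℕ) :
    ∑ j ∈ Finset.range m, ((j : ℝ) + c) = m * c + m * (m - 1) / 2 := by
  induction m with
  | zero => simp
  | succ m ih =>
    rw [Finset.sum_range_succ, ih]
    push_cast
    ring

private lemma sum_quad (b c : ℝ) (m : ℕ) :
    ∑ j ∈ Finset.range m, ((j : ℝ) + b) * ((j : ℝ) + c) =
      m * (m - 1) * (2 * m - 1) / 6 + (b + c) * (m * (m - 1) / 2) + m * b * c := by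
  induction m with
  | zero => simp
  | succ m ih =>
    rw [Finset.sum_range_succ, ih]
    push_cast
    ring

theorem stmt_8 (t : ℤ) (δ : ℕ) (hδ : 2 ≤ δ) :
    ∀ tm ∈ Finset.Icc (t - (δ : ℤ) + 2) t, 0 ≤ olsWeight t δ tm := by
  intro tm hm
  rw [Finset.mem_Icc] at hm
  obtain ⟨h1, h2⟩ := hm
  have hδR : (2 : ℝ) ≤ (δ : ℝ) := by exact_mod_cast hδ
  unfold olsWeight
  apply div_nonneg
  · -- numerator
    set n : ℕ := (t - tm).toNat with hn
    have hnz : (n : ℤ) = t - tm := by omega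
    have ht : t = tm + (n : ℤ) := by omega
    have key : Finset.Icc tm t = Finset.Icc tm (tm + (n : ℤ)) := by
      rw [← ht]
    rw [key, icc_reindex (fun i => (i : ℝ) - (2 * (t : ℝ) - (δ : ℝ) + 1) / 2) tm n]
    have : ∀ j ∈ Finset.range (n + 1),
        ((tm + (j : ℤ) : ℤ) : ℝ) - (2 * (t : ℝ) - (δ : ℝ) + 1) / 2 =
        (j : ℝ) + ((tm : ℝ) - (2 * (t : ℝ) - (δ : ℝ) + 1) / 2) := by
      intro j _
      push_cast
      ring
    rw [Finset.sum_congr rfl this, sum_lin]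
    have htm : ((t : ℝ) - (δ : ℝ) + 2) ≤ (tm : ℝ) := by exact_mod_cast h1
    have htR : (t : ℝ) = (tm : ℝ) + (n : ℝ) := by exact_mod_cast ht
    have hn0 : (0 : ℝ) ≤ (n : ℝ) := by positivity
    push_cast
    nlinarith [hn0, htm, htR]
  · -- denominator
    set a : ℤ := t - (δ : ℤ) + 1 with ha
    have hm1 : a + ((δ - 1 : ℕ) : ℤ) = t := by omega
    have key : Finset.Icc (t - (δ : ℤ) + 1) t = Finset.Icc a (a + ((δ - 1 : ℕ) : ℤ)) := by
      rw [hm1]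
    rw [key, icc_reindex
      (fun i => ((i : ℝ) - ((t : ℝ) - (δ : ℝ) + 1)) * ((i : ℝ) - (2 * (t : ℝ) - (δ : ℝ) + 1) / 2)) a (δ - 1)]
    have hrange : δ - 1 + 1 = δ := by omega
    rw [hrange]
    have haR : (a : ℝ) = (t : ℝ) - (δ : ℝ) + 1 := by
      rw [ha]; push_cast; ring
    have hcong : ∀ j ∈ Finset.range δ,
        (((a + (j : ℤ) : ℤ) : ℝ) - ((t : ℝ) - (δ : ℝ) + 1)) *
          (((a + (j : ℤ) : ℤ) : ℝ) - (2 * (t : ℝ) - (δ : ℝ) + 1) / 2) =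
        ((j : ℝ) + 0) * ((j : ℝ) + (1 - (δ : ℝ)) / 2) := by
      intro j _
      push_cast
      rw [haR]
      ring
    rw [Finset.sum_congr rfl hcong, sum_quad]
    nlinarith [hδR, mul_nonneg (mul_nonneg (by linarith : (0:ℝ) ≤ (δ:ℝ))
      (by linarith : (0:ℝ) ≤ (δ:ℝ) - 1)) (by linarith : (0:ℝ) ≤ (δ:ℝ) + 1)]
end

section
/- Let t be an integer and let δ ≥ 2 be a natural number. Then the OLS fitting-window weight placed on the most recent (target) difference satisfies the closed form μ̂_t = 6/(δ·(δ+1)). In particular, μ̂_t = 1 if and only if δ = 2, i.e., the OLS weight is fully concentrated on the target data exactly when the fitting window has size 2. -/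
theorem stmt_9 (t : ℤ) (δ : ℕ) (hδ : 2 ≤ δ) :
    olsWeight t δ t = 6 / ((δ : ℝ) * ((δ : ℝ) + 1)) ∧
    (olsWeight t δ t = 1 ↔ δ = 2) := by
  have key : olsWeight t δ t = 6 / ((δ : ℝ) * ((δ : ℝ) + 1)) := by
    have hnum : (∑ i ∈ Finset.Icc t t, ((i : ℝ) - (2 * (t : ℝ) - (δ : ℝ) + 1) / 2))
        = ((δ : ℝ) - 1) / 2 := by
      rw [Finset.Icc_self, Finset.sum_singleton]; ring
    have hshift : ∀ (n : ℕ) (a : ℤ) (f : ℤ → ℝ),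
        ∑ i ∈ Finset.Icc a (a + n - 1), f i = ∑ j ∈ Finset.range n, f (a + j) := by
      intro n
      induction n with
      | zero => intro a f; simp
      | succ n ih =>
          intro a f
          have h1 : a + (n + 1 : ℕ) - 1 = (a + n - 1) + 1 := by push_cast; ring
          have h3 : Finset.Icc a ((a + n - 1) + 1) = insert ((a + n - 1) + 1) (Finset.Icc a (a + n - 1)) := by
            ext x; simp only [Finset.mem_Icc, Finset.mem_insert]; omega
          have h4 : ((a + (n:ℤ) - 1) + 1) ∉ Finset.Icc a (a + n - 1) := by
            simp only [Finset.mem_Icc]; omega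
          rw [h1, h3, Finset.sum_insert h4, ih a f, Finset.sum_range_succ]
          rw [add_comm]
          congr 2
          omega
    have hsum1 : ∀ n : ℕ, ∑ j ∈ Finset.range n, (j : ℝ) = n * (n - 1) / 2 := by
      intro n
      induction n with
      | zero => simp
      | succ n ih => rw [Finset.sum_range_succ, ih]; push_cast; ring
    have hsum2 : ∀ n : ℕ, ∑ j ∈ Finset.range n, (j : ℝ) ^ 2
        = n * (n - 1) * (2 * n - 1) / 6 := by
      intro n
      induction n with
      | zero => simp
      | succ n ih => rw [Finset.sum_range_succ, ih]; push_cast; ring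
    have hden : (∑ i ∈ Finset.Icc (t - (δ : ℤ) + 1) t,
        ((i : ℝ) - ((t : ℝ) - (δ : ℝ) + 1)) * ((i : ℝ) - (2 * (t : ℝ) - (δ : ℝ) + 1) / 2))
        = (δ : ℝ) * ((δ : ℝ) - 1) * ((δ : ℝ) + 1) / 12 := by
      rw [show Finset.Icc (t - (δ : ℤ) + 1) t
          = Finset.Icc (t - (δ : ℤ) + 1) ((t - (δ : ℤ) + 1) + δ - 1) by congr 1; ring,
        hshift δ (t - (δ : ℤ) + 1)
        (fun i => ((i : ℝ) - ((t : ℝ) - (δ : ℝ) + 1)) * ((i : ℝ) - (2 * (t : ℝ) - (δ : ℝ) + 1) / 2))]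
      calc _ = ∑ j ∈ Finset.range δ, ((j : ℝ) ^ 2 - ((δ : ℝ) - 1) / 2 * (j : ℝ)) :=
            Finset.sum_congr rfl (fun j _ => by push_cast; ring)
        _ = (δ : ℝ) * ((δ : ℝ) - 1) * ((δ : ℝ) + 1) / 12 := by
            rw [Finset.sum_sub_distrib, ← Finset.mul_sum, hsum1 δ, hsum2 δ]; ring
    have hδR : (2 : ℝ) ≤ (δ : ℝ) := by exact_mod_cast hδ
    have h1 : (0 : ℝ) < (δ : ℝ) := by linarith
    have h2 : (0 : ℝ) < (δ : ℝ) - 1 := by linarith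
    have h3 : (0 : ℝ) < (δ : ℝ) + 1 := by linarith
    have hpos : (0 : ℝ) < (δ : ℝ) * ((δ : ℝ) - 1) * ((δ : ℝ) + 1) / 12 := by
      apply div_pos (mul_pos (mul_pos h1 h2) h3); norm_num
    have hpos2 : (0 : ℝ) < (δ : ℝ) * ((δ : ℝ) + 1) := mul_pos h1 h3
    rw [olsWeight, hnum, hden, div_eq_div_iff (ne_of_gt hpos) (ne_of_gt hpos2)]
    ring
  refine ⟨key, ?_⟩
  rw [key]
  constructor
  · intro h
    have hδR : (2 : ℝ) ≤ (δ : ℝ) := by exact_mod_cast hδ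
    have hne : (δ : ℝ) * ((δ : ℝ) + 1) ≠ 0 := by nlinarith
    rw [div_eq_one_iff_eq hne] at h
    have : (δ : ℝ) * ((δ : ℝ) + 1) = ((δ * (δ + 1) : ℕ) : ℝ) := by push_cast; ring
    rw [this] at h
    have h6 : δ * (δ + 1) = 6 := by exact_mod_cast h.symm
    nlinarith [h6]
  · intro h; subst h; norm_num
end

section
/- Let t be an integer and let δ > 3 be a natural number. Then the OLS fitting-window weights μ̂_{t⁻}, t⁻ ∈ {t−δ+2, …, t}, are strictly unimodal with peak at the center of the window: μ̂_{j} < μ̂_{j+1} for every integer j with t−δ+2 ≤ j < ⌊(2t−δ+2)/2⌋; the two central weights are equal, μ̂_{⌊(2t−δ+2)/2⌋} = μ̂_{⌈(2t−δ+2)/2⌉}; and μ̂_{j} > μ̂_{j+1} for every integer j with ⌈(2t−δ+2)/2⌉ ≤ j < t. -/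
lemma aux_sum_Icc_top (f : ℤ → ℝ) (a b : ℤ) (h : a ≤ b + 1) :
    ∑ i ∈ Finset.Icc a (b + 1), f i = (∑ i ∈ Finset.Icc a b, f i) + f (b + 1) := by
  have hins : Finset.Icc a (b + 1) = insert (b + 1) (Finset.Icc a b) := by
    ext x; simp; omega
  rw [hins, Finset.sum_insert (by simp), add_comm]

lemma aux_sum_Icc_eq_range (f : ℤ → ℝ) (a : ℤ) (n : ℕ) :
    ∑ i ∈ Finset.Icc a (a + n - 1), f i = ∑ k ∈ Finset.range n, f (a + k) := by
  induction n with
  | zero => simp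
  | succ n ih =>
      rw [Finset.sum_range_succ, ← ih]
      have h1 : a + ((n : ℤ) + 1) - 1 = (a + n - 1) + 1 := by ring
      push_cast
      rw [h1, aux_sum_Icc_top f a (a + (n : ℤ) - 1) (by omega)]
      congr 1
      · congr 1; ring

lemma aux_sum_range_cast (n : ℕ) : ∑ k ∈ Finset.range n, (k : ℝ) = n * (n - 1) / 2 := by
  induction n with
  | zero => simp
  | succ n ih => rw [Finset.sum_range_succ, ih]; push_cast; ring

lemma aux_sum_range_sq (n : ℕ) :
    ∑ k ∈ Finset.range n, (k : ℝ) ^ 2 = n * (n - 1) * (2 * n - 1) / 6 := by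
  induction n with
  | zero => simp
  | succ n ih => rw [Finset.sum_range_succ, ih]; push_cast; ring

lemma aux_denom (t : ℤ) (δ : ℕ) :
    (∑ i ∈ Finset.Icc (t - (δ : ℤ) + 1) t,
      ((i : ℝ) - ((t : ℝ) - (δ : ℝ) + 1)) * ((i : ℝ) - (2 * (t : ℝ) - (δ : ℝ) + 1) / 2))
    = (δ : ℝ) * ((δ : ℝ) - 1) * ((δ : ℝ) + 1) / 12 := by
  have key := aux_sum_Icc_eq_range
    (fun i => ((i : ℝ) - ((t : ℝ) - (δ : ℝ) + 1)) * ((i : ℝ) - (2 * (t : ℝ) - (δ : ℝ) + 1) / 2))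
    (t - (δ : ℤ) + 1) δ
  have e : t - (δ : ℤ) + 1 + (δ : ℤ) - 1 = t := by ring
  rw [e] at key
  rw [key]
  have hterm : ∑ k ∈ Finset.range δ,
      ((((t - (δ : ℤ) + 1 + (k : ℤ)) : ℤ) : ℝ) - ((t : ℝ) - (δ : ℝ) + 1)) *
        ((((t - (δ : ℤ) + 1 + (k : ℤ)) : ℤ) : ℝ) - (2 * (t : ℝ) - (δ : ℝ) + 1) / 2)
      = ∑ k ∈ Finset.range δ, ((k : ℝ) ^ 2 - ((δ : ℝ) - 1) / 2 * (k : ℝ)) :=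
    Finset.sum_congr rfl (fun k _ => by push_cast; ring)
  rw [hterm, Finset.sum_sub_distrib, ← Finset.mul_sum,
    aux_sum_range_cast, aux_sum_range_sq]
  ring

lemma aux_diff (t : ℤ) (δ : ℕ) (j : ℤ) (hj : j ≤ t) :
    olsWeight t δ (j + 1) - olsWeight t δ j
    = ((2 * (t : ℝ) - (δ : ℝ) + 1) / 2 - (j : ℝ)) /
        ((δ : ℝ) * ((δ : ℝ) - 1) * ((δ : ℝ) + 1) / 12) := by
  have hsplit : Finset.Icc j t = insert j (Finset.Icc (j + 1) t) := by
    ext x; simp; omega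
  have hnot : j ∉ Finset.Icc (j + 1) t := by simp
  unfold olsWeight
  rw [aux_denom, hsplit, Finset.sum_insert hnot]
  ring

theorem stmt_11 (t : ℤ) (δ : ℕ) (hδ : 3 < δ) :
    (∀ j : ℤ, t - (δ : ℤ) + 2 ≤ j → j < ⌊(2 * (t : ℝ) - (δ : ℝ) + 2) / 2⌋ →
      olsWeight t δ j < olsWeight t δ (j + 1)) ∧
    olsWeight t δ ⌊(2 * (t : ℝ) - (δ : ℝ) + 2) / 2⌋ =
      olsWeight t δ ⌈(2 * (t : ℝ) - (δ : ℝ) + 2) / 2⌉ ∧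
    (∀ j : ℤ, ⌈(2 * (t : ℝ) - (δ : ℝ) + 2) / 2⌉ ≤ j → j < t →
      olsWeight t δ (j + 1) < olsWeight t δ j) := by
  have hδ4 : (4 : ℝ) ≤ (δ : ℝ) := by exact_mod_cast hδ
  have hDpos : (0 : ℝ) < (δ : ℝ) * ((δ : ℝ) - 1) * ((δ : ℝ) + 1) / 12 :=
    div_pos (mul_pos (mul_pos (by linarith) (by linarith)) (by linarith)) (by norm_num)
  refine ⟨?_, ?_, ?_⟩
  · intro j _ h2
    have hfl : (⌊(2 * (t : ℝ) - (δ : ℝ) + 2) / 2⌋ : ℝ) ≤ (2 * (t : ℝ) - (δ : ℝ) + 2) / 2 :=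
      Int.floor_le _
    have hjr : ((j : ℝ) + 1) ≤ (⌊(2 * (t : ℝ) - (δ : ℝ) + 2) / 2⌋ : ℝ) := by
      exact_mod_cast h2
    have hjt : j ≤ t := by
      have : (j : ℝ) + 1 ≤ (t : ℝ) := by linarith
      have : (j : ℝ) ≤ (t : ℝ) := by linarith
      exact_mod_cast this
    have hd := aux_diff t δ j hjt
    have hnum : (0 : ℝ) < (2 * (t : ℝ) - (δ : ℝ) + 1) / 2 - (j : ℝ) := by linarith
    have hpos : (0 : ℝ) < olsWeight t δ (j + 1) - olsWeight t δ j := by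
      rw [hd]; exact div_pos hnum hDpos
    linarith
  · rcases Nat.even_or_odd δ with ⟨d, hd⟩ | ⟨d, hd⟩
    · subst hd
      have hx : (2 * (t : ℝ) - ((d + d : ℕ) : ℝ) + 2) / 2 = (((t - d + 1 : ℤ)) : ℝ) := by
        push_cast; ring
      rw [hx, Int.floor_intCast, Int.ceil_intCast]
    · subst hd
      have hf : ⌊(2 * (t : ℝ) - ((2 * d + 1 : ℕ) : ℝ) + 2) / 2⌋ = t - d := by
        rw [Int.floor_eq_iff]
        constructor <;> [skip; skip] <;> push_cast <;> linarith
      have hc : ⌈(2 * (t : ℝ) - ((2 * d + 1 : ℕ) : ℝ) + 2) / 2⌉ = t - d + 1 := by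
        rw [Int.ceil_eq_iff]
        constructor <;> push_cast <;> linarith
      rw [hf, hc]
      have hjt : t - (d : ℤ) ≤ t := by omega
      have hd0 := aux_diff t (2 * d + 1) (t - d) hjt
      have hnum : (2 * (t : ℝ) - ((2 * d + 1 : ℕ) : ℝ) + 1) / 2 - ((t - (d : ℤ) : ℤ) : ℝ) = 0 := by
        push_cast; ring
      rw [hnum, zero_div] at hd0
      have := sub_eq_zero.mp hd0
      rw [show t - (d : ℤ) + 1 = t - d + 1 from rfl] at this
      exact this.symm
  · intro j h1 h2
    have hcl : (2 * (t : ℝ) - (δ : ℝ) + 2) / 2 ≤ (⌈(2 * (t : ℝ) - (δ : ℝ) + 2) / 2⌉ : ℝ) :=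
      Int.le_ceil _
    have hjr : (⌈(2 * (t : ℝ) - (δ : ℝ) + 2) / 2⌉ : ℝ) ≤ (j : ℝ) := by exact_mod_cast h1
    have hjt : j ≤ t := le_of_lt h2
    have hd := aux_diff t δ j hjt
    have hnum : (2 * (t : ℝ) - (δ : ℝ) + 1) / 2 - (j : ℝ) < 0 := by linarith
    have hneg : olsWeight t δ (j + 1) - olsWeight t δ j < 0 := by
      rw [hd]; exact div_neg_of_neg_of_pos hnum hDpos
    linarith
end

section
/- Let t be an integer and let δ ≥ 2 be a natural number. Then the central OLS fitting-window weight is the maximum of all the weights: μ̂_{t⁻} ≤ μ̂_{⌊(2t−δ+2)/2⌋} for every t⁻ ∈ {t−δ+2, …, t}. -/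
open Finset

lemma myIcc_succ (a b : ℤ) (h : a ≤ b + 1) :
    Finset.Icc a (b + 1) = insert (b + 1) (Finset.Icc a b) := by
  ext x; simp [Finset.mem_Icc]; omega

lemma sum_Icc_succ_top' (a b : ℤ) (h : a ≤ b + 1) (f : ℤ → ℝ) :
    ∑ i ∈ Finset.Icc a (b + 1), f i = (∑ i ∈ Finset.Icc a b, f i) + f (b + 1) := by
  rw [myIcc_succ a b h, Finset.sum_insert (by simp)]
  ring

lemma sum_cast (a : ℤ) (n : ℕ) :
    ∑ i ∈ Finset.Icc a (a + (n : ℤ)), (i : ℝ) = ((n : ℝ) + 1) * (2 * (a : ℝ) + n) / 2 := by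
  induction n with
  | zero => simp
  | succ n ih =>
    have : a + ((n + 1 : ℕ) : ℤ) = (a + n) + 1 := by push_cast; ring
    rw [this, sum_Icc_succ_top' a (a + n) (by omega)]
    rw [ih]; push_cast; ring

lemma sum_sq_cast (a : ℤ) (n : ℕ) :
    ∑ i ∈ Finset.Icc a (a + (n : ℤ)), (i : ℝ) ^ 2 =
      ((n : ℝ) + 1) * (a : ℝ) ^ 2 + (a : ℝ) * n * (n + 1) + n * (n + 1) * (2 * n + 1) / 6 := by
  induction n with
  | zero => simp
  | succ n ih =>
    have : a + ((n + 1 : ℕ) : ℤ) = (a + n) + 1 := by push_cast; ring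
    rw [this, sum_Icc_succ_top' a (a + n) (by omega)]
    rw [ih]; push_cast; ring

lemma num_formula (t : ℤ) (δ : ℕ) (tm : ℤ) (h : tm ≤ t) :
    ∑ i ∈ Finset.Icc tm t, ((i : ℝ) - (2 * (t : ℝ) - (δ : ℝ) + 1) / 2)
      = (((t - tm : ℤ) : ℝ) + 1) * ((δ : ℝ) - 1 - ((t - tm : ℤ) : ℝ)) / 2 := by
  obtain ⟨n, hn⟩ : ∃ n : ℕ, t = tm + n := ⟨(t - tm).toNat, by omega⟩
  subst hn
  rw [Finset.sum_sub_distrib, sum_cast, Finset.sum_const, Int.card_Icc]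
  have h2 : (tm + n + 1 - tm).toNat = n + 1 := by omega
  rw [h2]; push_cast; ring

lemma denom_formula (t : ℤ) (δ : ℕ) (hδ : 2 ≤ δ) :
    ∑ i ∈ Finset.Icc (t - (δ : ℤ) + 1) t,
        ((i : ℝ) - ((t : ℝ) - (δ : ℝ) + 1)) * ((i : ℝ) - (2 * (t : ℝ) - (δ : ℝ) + 1) / 2)
      = (δ : ℝ) * ((δ : ℝ) ^ 2 - 1) / 12 := by
  set A : ℝ := (t : ℝ) - (δ : ℝ) + 1 with hA
  set c : ℝ := (2 * (t : ℝ) - (δ : ℝ) + 1) / 2 with hc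
  set a : ℤ := t - (δ : ℤ) + 1 with ha
  have ht : t = a + ((δ - 1 : ℕ) : ℤ) := by push_cast [Nat.cast_sub (by omega : 1 ≤ δ)]; omega
  have key : ∀ i ∈ Finset.Icc a t, ((i : ℝ) - A) * ((i : ℝ) - c)
      = (i : ℝ) ^ 2 - (A + c) * (i : ℝ) + A * c := fun i _ => by ring
  rw [Finset.sum_congr rfl key]
  rw [Finset.sum_add_distrib, Finset.sum_sub_distrib, ← Finset.mul_sum, Finset.sum_const,
    Int.card_Icc]
  rw [ht, sum_cast, sum_sq_cast]
  have h2 : (a + ((δ - 1 : ℕ) : ℤ) + 1 - a).toNat = δ := by omega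
  rw [h2, hA, hc, ha]
  have hd1 : ((δ - 1 : ℕ) : ℝ) = (δ : ℝ) - 1 := by
    push_cast [Nat.cast_sub (by omega : 1 ≤ δ)]; ring
  rw [hd1]
  push_cast
  ring



theorem stmt_12 (t : ℤ) (δ : ℕ) (hδ : 2 ≤ δ) :
    ∀ tm ∈ Finset.Icc (t - (δ : ℤ) + 2) t,
      olsWeight t δ tm ≤ olsWeight t δ ⌊(2 * (t : ℝ) - (δ : ℝ) + 2) / 2⌋ := by
  intro tm htm
  rw [Finset.mem_Icc] at htm
  set q : ℕ := δ / 2 with hq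
  set r : ℕ := δ % 2 with hr
  have hδqr : δ = 2 * q + r := by omega
  have hr1 : r ≤ 1 := by omega
  have hq1 : 1 ≤ q := by omega
  have hm : ⌊(2 * (t : ℝ) - (δ : ℝ) + 2) / 2⌋ = t + 1 - q - r := by
    rw [Int.floor_eq_iff]
    have hδR : (δ : ℝ) = 2 * q + r := by exact_mod_cast congrArg (Nat.cast : ℕ → ℝ) hδqr
    have hrR : (r : ℝ) ≤ 1 := by exact_mod_cast hr1
    have hr0 : (0 : ℝ) ≤ r := by positivity
    constructor
    · push_cast; linarith
    · push_cast; linarith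
  rw [hm]
  have hmle : t + 1 - (q : ℤ) - r ≤ t := by omega
  unfold olsWeight
  rw [denom_formula t δ hδ, num_formula t δ tm (by omega), num_formula t δ _ hmle]
  have hDpos : (0 : ℝ) < (δ : ℝ) * ((δ : ℝ) ^ 2 - 1) / 12 := by
    have : (2 : ℝ) ≤ (δ : ℝ) := by exact_mod_cast hδ
    nlinarith
  rw [div_le_div_iff_of_pos_right hDpos]
  -- integer inequality
  set k : ℤ := t - tm with hk
  have hks : t - (t + 1 - (q : ℤ) - r) = q + r - 1 := by ring
  rw [hks]
  have hkb : 0 ≤ k ∧ k ≤ (δ : ℤ) - 2 := by omega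
  have hint : (k + 1) * ((δ : ℤ) - 1 - k) ≤ ((q : ℤ) + r) * q := by
    have hu : (k + 1 - (q : ℤ)) * (k + 1 - q - r) ≥ 0 := by
      rcases (by omega : r = 0 ∨ r = 1) with h | h
      · rw [h]; push_cast; nlinarith [sq_nonneg (k + 1 - (q : ℤ))]
      · rw [h]
        rcases le_or_gt (k + 1 - (q : ℤ)) 0 with h2 | h2
        · have : k + 1 - (q : ℤ) - 1 ≤ 0 := by omega
          push_cast; nlinarith
        · have h3 : 1 ≤ k + 1 - (q : ℤ) := h2
          push_cast; nlinarith
    have hδZ : (δ : ℤ) = 2 * q + r := by exact_mod_cast congrArg (Nat.cast : ℕ → ℤ) hδqr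
    nlinarith
  have hcast : ((k : ℝ) + 1) * ((δ : ℝ) - 1 - k) ≤ ((q : ℝ) + r + 1 - 1) * ((δ : ℝ) - 1 - (q + r - 1)) := by
    have hδZ : (δ : ℤ) = 2 * q + r := by exact_mod_cast congrArg (Nat.cast : ℕ → ℤ) hδqr
    have := hint
    have hR : ((k + 1) * ((δ : ℤ) - 1 - k) : ℝ) ≤ (((q : ℤ) + r) * q : ℝ) := by exact_mod_cast hint
    push_cast at hR ⊢
    have hδR : (δ : ℝ) = 2 * q + r := by exact_mod_cast congrArg (Nat.cast : ℕ → ℝ) hδqr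
    nlinarith [hR]
  push_cast
  push_cast at hcast
  linarith
end
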